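/- For every integer p ≥ 3 and every fixed β_0 with β*(p) < β_0 < log 2, there exists β̲ > 0 such that sup_{x ∈ η_p^{−1}((β,∞))} H_{β_0,p}(x) = 0 for all β > β̲; consequently the Bahadur slope of the maximum pseudolikelihood test equals 2 H_{β_0,p}(m_*(β_0,p)) for all alternatives β > β̲, i.e., it no longer changes with β. -/

import Mathlib

/-!
Near `0` the bound `I(x) ≥ x²/4` beats `β₀ xᵖ` because `p ≥ 3`, so `H_{β₀,p} ≤ 0` there, and at
`±1` we have `H_{β₀,p} ≤ |β₀| - log 2 < 0`. Hence, away from a neighbourhood of `0`, the set where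
`H_{β₀,p} ≥ 0` is a compact subset of `(-1, 1) ∖ {0}`, on which `η_p` is continuous and hence bounded
by some `B`. For `β > B` the set `{η_p > β}` misses `{H_{β₀,p} > 0}`, yet it contains points
arbitrarily close to `0⁺`, where `η_p → ∞` and `H_{β₀,p}` is close to `H_{β₀,p}(0) = 0`.
-/

open Real Set Filter

/-- `I(x) = ½[(1+x)log(1+x) + (1−x)log(1−x)]` (with `Real.log 0 = 0`). -/
noncomputable def bahI (x : ℝ) : ℝ :=
  ((1 + x) * Real.log (1 + x) + (1 - x) * Real.log (1 - x)) / 2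

/-- `H_{β,p}(x) = β xᵖ − I(x)`. -/
noncomputable def bahH (β : ℝ) (p : ℕ) (x : ℝ) : ℝ := β * x ^ p - bahI x

/-- `β*(p) = sup {β ≥ 0 : sup_{x∈[−1,1]} H_{β,p}(x) = 0}`. -/
noncomputable def betaStar (p : ℕ) : ℝ :=
  sSup {β : ℝ | 0 ≤ β ∧ sSup (bahH β p '' Set.Icc (-1 : ℝ) 1) = 0}

/-- inverse hyperbolic tangent. -/
noncomputable def arctanh (x : ℝ) : ℝ := Real.log ((1 + x) / (1 - x)) / 2

/-- `η_p(t) = p⁻¹ t^{1−p} arctanh t` for `t ≠ 0`, and `η_p(0) = 0`. -/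
noncomputable def etaFn (p : ℕ) (t : ℝ) : ℝ :=
  if t = 0 then 0 else (p : ℝ)⁻¹ * t ^ (1 - (p : ℤ)) * arctanh t

open Topology

lemma bahI_neg (x : ℝ) : bahI (-x) = bahI x := by
  simp only [bahI, ← sub_eq_add_neg, sub_neg_eq_add]
  ring

lemma bahI_abs (x : ℝ) : bahI |x| = bahI x := by
  rcases abs_choice x with h | h <;> simp only [h, bahI_neg]

lemma bahI_one : bahI 1 = Real.log 2 := by
  norm_num [bahI]

lemma continuous_bahI : Continuous bahI := by
  unfold bahI
  have h := Real.continuous_mul_log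
  fun_prop

lemma continuous_bahH (β : ℝ) (p : ℕ) : Continuous (bahH β p) :=
  (continuous_const.mul (continuous_pow p)).sub continuous_bahI

lemma half_le_arctanh {x : ℝ} (h0 : 0 ≤ x) (h1 : x < 1) : x / 2 ≤ arctanh x := by
  rw [arctanh, Real.log_div (by linarith) (by linarith)]
  have h1p : 0 ≤ Real.log (1 + x) := Real.log_nonneg (by linarith)
  have h1m : Real.log (1 - x) ≤ -x := by
    linarith [Real.log_le_sub_one_of_pos (show 0 < 1 - x by linarith)]
  linarith

lemma continuousAt_arctanh {x : ℝ} (hx : |x| < 1) : ContinuousAt arctanh x := by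
  obtain ⟨h1, h2⟩ := abs_lt.1 hx
  unfold arctanh
  refine ((ContinuousAt.div (by fun_prop) (by fun_prop) ?_).log ?_).div_const 2
  · linarith
  · exact (div_pos (by linarith) (by linarith)).ne'

lemma hasDerivAt_bahI {x : ℝ} (hx : |x| < 1) : HasDerivAt bahI (arctanh x) x := by
  obtain ⟨h1p, h1m⟩ : 0 < 1 + x ∧ 0 < 1 - x := by constructor <;> linarith [abs_lt.1 hx]
  have hp : HasDerivAt (fun y => (1 + y) * Real.log (1 + y)) (Real.log (1 + x) + 1) x :=
    (((hasDerivAt_id' x).const_add 1).fun_mul (((hasDerivAt_id' x).const_add 1).log h1p.ne'))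
      |>.congr_deriv (by field_simp)
  have hm : HasDerivAt (fun y => (1 - y) * Real.log (1 - y)) (-Real.log (1 - x) - 1) x :=
    (((hasDerivAt_id' x).const_sub 1).fun_mul (((hasDerivAt_id' x).const_sub 1).log h1m.ne'))
      |>.congr_deriv (by field_simp; ring)
  refine ((hp.add hm).div_const 2).congr_deriv ?_
  rw [arctanh, Real.log_div h1p.ne' h1m.ne']
  ring

lemma sq_div_four_le_bahI {x : ℝ} (hx : |x| ≤ 1) : x ^ 2 / 4 ≤ bahI x := by
  rw [← bahI_abs, ← sq_abs]
  have hmono : MonotoneOn (fun z => bahI z - z ^ 2 / 4) (Icc 0 1) := by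
    refine monotoneOn_of_hasDerivWithinAt_nonneg (f' := fun z => arctanh z - z / 2)
      (convex_Icc 0 1) (continuous_bahI.sub (by fun_prop)).continuousOn (fun z hz => ?_) (fun z hz => ?_)
    · rw [interior_Icc] at hz
      have hz1 : |z| < 1 := abs_lt.2 ⟨by linarith [hz.1], hz.2⟩
      refine ((hasDerivAt_bahI hz1).sub ((hasDerivAt_pow 2 z).div_const 4)).hasDerivWithinAt
        |>.congr_deriv ?_
      ring
    · rw [interior_Icc] at hz
      linarith [half_le_arctanh hz.1.le hz.2]
  have := hmono ⟨le_rfl, zero_le_one⟩ ⟨abs_nonneg x, hx⟩ (abs_nonneg x)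
  norm_num [bahI] at this ⊢
  linarith

lemma eventually_bahH_nonpos {p : ℕ} (hp : 3 ≤ p) (β : ℝ) : ∀ᶠ t in 𝓝 0, bahH β p t ≤ 0 := by
  have habs : Tendsto (fun t : ℝ => |t|) (𝓝 0) (𝓝 0) := by
    simpa using (continuous_abs.tendsto (0 : ℝ))
  filter_upwards [habs.eventually (ge_mem_nhds one_pos),
    (habs.const_mul |β|).eventually (ge_mem_nhds (by norm_num : (|β| * 0 : ℝ) < 1 / 4))]
    with t ht1 htβ
  have hI := sq_div_four_le_bahI ht1
  have hpow : |t| ^ p ≤ |t| ^ 3 := pow_le_pow_of_le_one (abs_nonneg t) ht1 hp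
  refine sub_nonpos.2 ?_
  calc β * t ^ p ≤ |β| * |t| ^ p := by
        rw [← abs_pow, ← abs_mul]; exact le_abs_self _
    _ ≤ |β| * |t| * t ^ 2 := by
        rw [mul_assoc, ← sq_abs t, ← pow_succ']
        exact mul_le_mul_of_nonneg_left hpow (abs_nonneg β)
    _ ≤ bahI t := by nlinarith [sq_nonneg t]

lemma bahH_neg_of_abs_eq_one {β : ℝ} (hβ : |β| < Real.log 2) (p : ℕ) {t : ℝ} (ht : |t| = 1) :
    bahH β p t < 0 := by
  have hpow : β * t ^ p ≤ |β| := by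
    simpa [abs_mul, abs_pow, ht] using le_abs_self (β * t ^ p)
  rw [bahH, ← bahI_abs, ht, bahI_one]
  linarith

lemma inv_mul_inv_le_etaFn {p : ℕ} (hp : 3 ≤ p) {t : ℝ} (ht : t ∈ Ioo 0 1) :
    (2 * p : ℝ)⁻¹ * t⁻¹ ≤ etaFn p t := by
  obtain ⟨ht0, ht1⟩ := ht
  have hzpow : t ^ (-2 : ℤ) ≤ t ^ (1 - (p : ℤ)) :=
    zpow_le_zpow_right_of_le_one₀ ht0 ht1.le (by omega)
  rw [etaFn, if_neg ht0.ne']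
  calc (2 * p : ℝ)⁻¹ * t⁻¹ = (p : ℝ)⁻¹ * t ^ (-2 : ℤ) * (t / 2) := by
        field_simp
    _ ≤ (p : ℝ)⁻¹ * t ^ (1 - (p : ℤ)) * arctanh t := by
        gcongr
        exact half_le_arctanh ht0.le ht1

lemma tendsto_etaFn_nhdsGT_zero {p : ℕ} (hp : 3 ≤ p) : Tendsto (etaFn p) (𝓝[>] 0) atTop :=
  tendsto_atTop_mono' _
    (Filter.mem_of_superset (Ioo_mem_nhdsGT one_pos) fun _ ht => inv_mul_inv_le_etaFn hp ht)
    (tendsto_inv_nhdsGT_zero.const_mul_atTop (by positivity))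

lemma continuousAt_etaFn (p : ℕ) {t : ℝ} (ht0 : t ≠ 0) (ht1 : |t| < 1) :
    ContinuousAt (etaFn p) t := by
  have hformula : ContinuousAt (fun s => (p : ℝ)⁻¹ * s ^ (1 - (p : ℤ)) * arctanh s) t :=
    (continuousAt_const.mul (continuousAt_zpow₀ t _ (Or.inl ht0))).mul (continuousAt_arctanh ht1)
  refine hformula.congr_of_eventuallyEq ?_
  filter_upwards [isOpen_ne.mem_nhds ht0] with s hs
  rw [etaFn, if_neg hs]

lemma exists_forall_bahH_nonpos_of_lt_etaFn {p : ℕ} (hp : 3 ≤ p) {β₀ : ℝ}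
    (hβ₀ : |β₀| < Real.log 2) :
    ∃ B, 0 < B ∧ ∀ β, B < β → ∀ t ∈ Icc (-1 : ℝ) 1, β < etaFn p t → bahH β₀ p t ≤ 0 := by
  obtain ⟨δ, hδ, hnear⟩ := Metric.eventually_nhds_iff.1 (eventually_bahH_nonpos hp β₀)
  set K := Icc (-1 : ℝ) 1 ∩ {t | δ ≤ |t| ∧ 0 ≤ bahH β₀ p t}
  have hK : IsCompact K := isCompact_Icc.inter_right
    ((isClosed_le continuous_const continuous_abs).inter
      (isClosed_le continuous_const (continuous_bahH β₀ p)))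
  have hcont : ContinuousOn (etaFn p) K := by
    rintro t ⟨ht, hδt, hHt⟩
    have ht0 : t ≠ 0 := abs_pos.1 (hδ.trans_le hδt)
    have ht1 : |t| < 1 := (abs_le.2 ht).lt_of_ne
      fun h => (bahH_neg_of_abs_eq_one hβ₀ p h).not_ge hHt
    exact (continuousAt_etaFn p ht0 ht1).continuousWithinAt
  obtain ⟨A, hA⟩ := hK.bddAbove_image hcont
  refine ⟨max A 1, by positivity, fun β hβ t ht hηt => ?_⟩
  by_contra! hHt
  rcases lt_or_ge |t| δ with hδt | hδt
  · exact (hnear (by rwa [Real.dist_0_eq_abs])).not_gt hHt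
  · have := hA (mem_image_of_mem _ ⟨ht, hδt, hHt.le⟩)
    linarith [le_max_left A 1]

lemma sSup_bahH_image_lt_etaFn_eq_zero {p : ℕ} (hp : 3 ≤ p) {β β₀ : ℝ}
    (hle : ∀ t ∈ Icc (-1 : ℝ) 1, β < etaFn p t → bahH β₀ p t ≤ 0) :
    sSup (bahH β₀ p '' {t ∈ Icc (-1 : ℝ) 1 | β < etaFn p t}) = 0 := by
  have happrox : ∀ w < 0, ∃ t ∈ {t ∈ Icc (-1 : ℝ) 1 | β < etaFn p t}, w < bahH β₀ p t := by
    intro w hw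
    have hH : Tendsto (bahH β₀ p) (𝓝[>] 0) (𝓝 0) := by
      simpa [bahH, bahI, zero_pow (by omega : p ≠ 0)] using
        ((continuous_bahH β₀ p).tendsto 0).mono_left nhdsWithin_le_nhds
    have hIcc : ∀ᶠ t in 𝓝[>] (0 : ℝ), t ∈ Icc (-1 : ℝ) 1 :=
      mem_nhdsWithin_of_mem_nhds (Icc_mem_nhds (by norm_num) (by norm_num))
    obtain ⟨t, ht, hηt, hwt⟩ := (hIcc.and (((tendsto_etaFn_nhdsGT_zero hp).eventually_gt_atTop β).and
      (hH.eventually (lt_mem_nhds hw)))).exists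
    exact ⟨t, ⟨ht, hηt⟩, hwt⟩
  obtain ⟨t, ht, -⟩ := happrox (-1) (by norm_num)
  refine csSup_eq_of_forall_le_of_forall_lt_exists_gt ⟨_, mem_image_of_mem _ ht⟩ ?_ fun w hw => ?_
  · rintro _ ⟨t, ⟨ht, hηt⟩, rfl⟩
    exact hle t ht hηt
  · obtain ⟨t, ht, hwt⟩ := happrox w hw
    exact ⟨_, mem_image_of_mem _ ht, hwt⟩

theorem statement13_general (p : ℕ) (hp : 3 ≤ p) (β₀ : ℝ) (h0 : betaStar p < β₀)
    (h1 : β₀ < Real.log 2)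
    (m₀ : ℝ) (hm1 : m₀ ∈ Set.Icc (-1 : ℝ) 1)
    (hmax : IsMaxOn (bahH β₀ p) (Set.Icc (-1 : ℝ) 1) m₀) :
    ∃ B, 0 < B ∧ ∀ β, B < β →
      sSup (bahH β₀ p '' {t ∈ Set.Icc (-1 : ℝ) 1 | β < etaFn p t}) = 0 ∧
      2 * (sSup (bahH β₀ p '' Set.Icc (-1 : ℝ) 1)
          - sSup (bahH β₀ p '' {t ∈ Set.Icc (-1 : ℝ) 1 | β < etaFn p t}))
        = 2 * bahH β₀ p m₀ := by
  have hβ₀ : 0 < β₀ := (Real.sSup_nonneg fun _ hβ => hβ.1).trans_lt h0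
  obtain ⟨B, hB, hle⟩ :=
    exists_forall_bahH_nonpos_of_lt_etaFn hp (abs_lt.2 ⟨by linarith [Real.log_pos one_lt_two], h1⟩)
  have hsup : sSup (bahH β₀ p '' Icc (-1 : ℝ) 1) = bahH β₀ p m₀ :=
    IsGreatest.csSup_eq ⟨mem_image_of_mem _ hm1, forall_mem_image.2 hmax⟩
  refine ⟨B, hB, fun β hβ => ?_⟩
  have hzero := sSup_bahH_image_lt_etaFn_eq_zero hp (hle β hβ)
  exact ⟨hzero, by rw [hzero, hsup, sub_zero]⟩

/-- For `p ≥ 3` and fixed `β₀` with `β*(p) < β₀ < log 2`, with `m₀ = m_*(β₀,p)` the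
positive global maximizer of `H_{β₀,p}` on `[−1,1]`: there is `β̲ > 0` such that for all
`β > β̲`, `sup_{x ∈ η_p⁻¹((β,∞))} H_{β₀,p}(x) = 0`; consequently the MPL Bahadur slope
`2[sup_{[−1,1]} H_{β₀,p} − sup_{η_p⁻¹((β,∞))} H_{β₀,p}]` equals `2 H_{β₀,p}(m₀)` for all
such `β`, i.e. it no longer changes with `β`. -/
theorem statement13 (p : ℕ) (hp : 3 ≤ p) (β₀ : ℝ) (h0 : betaStar p < β₀)
    (h1 : β₀ < Real.log 2)
    (m₀ : ℝ) (hm0 : 0 < m₀) (hm1 : m₀ ∈ Set.Icc (-1 : ℝ) 1)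
    (hmax : IsMaxOn (bahH β₀ p) (Set.Icc (-1 : ℝ) 1) m₀) :
    ∃ B, 0 < B ∧ ∀ β, B < β →
      sSup (bahH β₀ p '' {t ∈ Set.Icc (-1 : ℝ) 1 | β < etaFn p t}) = 0 ∧
      2 * (sSup (bahH β₀ p '' Set.Icc (-1 : ℝ) 1)
          - sSup (bahH β₀ p '' {t ∈ Set.Icc (-1 : ℝ) 1 | β < etaFn p t}))
        = 2 * bahH β₀ p m₀ :=
  statement13_general p hp β₀ h0 h1 m₀ hm1 hmax
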